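/- Correctness of one binary-splitting step: let V be a finite type with 1 ≤ k ≤ |V|, and let L, R be disjoint nonempty finsets with L ∪ R = V. Call j : ℕ feasible if j ≤ k, j ≤ |L|, and k ≤ j + |R|. For each feasible j, let A_j ∈ FreeGroup V be supported in L with kill_S A_j = 1 ↔ |S ∩ L| ≥ j for all S : Finset V, and let B_j ∈ FreeGroup V be supported in R with kill_S B_j = 1 ↔ |S ∩ R| ≥ k − j for all S : Finset V (for j = 0, respectively j = k when k ≤ |L| and k ≤ |R|, this forces A_0 = 1, respectively B_k = 1). Set D_j = A_j · B_j. Then for every commutator tree T whose leaves are labelled bijectively by the family (D_j) over all feasible j, the value of T is a solution of the k-out-of specification on V: kill_S (value T) = 1 ↔ |S| ≥ k, for every S : Finset V. -/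

import Mathlib

/-- The removal homomorphism: kills the generators with index in `S`. -/
def kill {V : Type*} [DecidableEq V] (S : Finset V) : FreeGroup V →* FreeGroup V :=
  FreeGroup.lift fun i => if i ∈ S then 1 else FreeGroup.of i

/-- `h` is supported in the finset `L`: it lies in the subgroup generated by the
generators indexed by `L`. -/
def SupportedIn {V : Type*} (h : FreeGroup V) (L : Finset V) : Prop :=
  h ∈ Subgroup.closure (FreeGroup.of '' (L : Set V))

/-- A commutator tree: a full binary tree whose leaves are labelled by words of the
free group on `V`. -/
inductive CommTree (V : Type*) : Type _ where
  | leaf : FreeGroup V → CommTree V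
  | node : CommTree V → CommTree V → CommTree V

namespace CommTree

open scoped commutatorElement

/-- The value of a commutator tree: a leaf evaluates to its label, an internal node
to the commutator of the values of its two children. -/
def value {V : Type*} : CommTree V → FreeGroup V
  | leaf h => h
  | node a b => ⁅a.value, b.value⁆

/-- The list of leaf labels, in left-to-right order. -/
def leaves {V : Type*} : CommTree V → List (FreeGroup V)
  | leaf h => [h]
  | node a b => a.leaves ++ b.leaves

end CommTree

/-- `j` is a feasible split index for threshold `k` with part sizes `n₁`, `n₂`. -/
def Feasible (k n₁ n₂ j : ℕ) : Prop :=
  j ≤ k ∧ j ≤ n₁ ∧ k ≤ j + n₂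

instance (k n₁ n₂ : ℕ) : DecidablePred (Feasible k n₁ n₂) := fun j => by
  unfold Feasible; infer_instance

/-!
Commuting elements of a free group are powers of a common element (the subgroup they generate
is free and abelian, hence cyclic), and free groups are torsion-free. Hence if `kill S ⁅x, y⁆ = 1`
while `kill S x ≠ 1` and `kill S y ≠ 1`, then `x` and `y` are killed by exactly the same
`S' ⊇ S`; adding the generators outside `S` one at a time, both die at the same step.

For `D j = A j * B j`, `kill S (D j) = 1` iff `j ≤ |S ∩ L|` and `k - j ≤ |S ∩ R|`. Adding one
generator raises exactly one of these two counts by one, and the only newly satisfied index is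
then `j = |S ∩ L| + 1` or `j = k - |S ∩ R| - 1`; so no two leaves die at the same step, and
by induction on the tree `kill S T.value = 1` iff some leaf dies under `kill S`, that is, iff
`j ≤ |S ∩ L|` and `k - j ≤ |S ∩ R|` for some feasible `j`, that is, iff `k ≤ |S|`.
-/

open scoped commutatorElement

namespace FreeGroup
variable {α : Type*}

theorem subsingleton_of_forall_commute (h : ∀ u v : FreeGroup α, Commute u v) :
    Subsingleton α := by
  classical
  refine ⟨fun a b => by_contra fun hab => ?_⟩
  have := congrArg (lift fun i => if i = a then Equiv.swap (0 : Fin 3) 1 else Equiv.swap 1 2)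
    (h (of a) (of b)).eq
  simp only [_root_.map_mul, lift_apply_of, if_neg (Ne.symm hab)] at this
  exact absurd this (by decide)

theorem isCyclic_of_forall_commute (h : ∀ u v : FreeGroup α, Commute u v) :
    IsCyclic (FreeGroup α) := by
  have := subsingleton_of_forall_commute h
  cases isEmpty_or_nonempty α
  · infer_instance
  · have := uniqueOfSubsingleton (Classical.arbitrary α)
    infer_instance

theorem exists_zpow_eq_of_commute {x y : FreeGroup α} (h : Commute x y) :
    ∃ (c : FreeGroup α) (m n : ℤ), c ^ m = x ∧ c ^ n = y := by
  let H := Subgroup.closure {x, y}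
  have hcomm : ∀ u v : H, Commute u v := isMulCommutative_iff.mp <|
    Subgroup.isMulCommutative_closure <| by
      rintro a (rfl | rfl) b (rfl | rfl) <;> first | exact Commute.refl _ | exact h | exact h.symm
  have : IsCyclic H := by
    let e := IsFreeGroup.toFreeGroup H
    have := isCyclic_of_forall_commute fun u v => by
      simpa using ((hcomm (e.symm u) (e.symm v)).map e.toMonoidHom)
    exact isCyclic_of_surjective e.symm.toMonoidHom e.symm.surjective
  obtain ⟨c, hc⟩ := IsCyclic.exists_generator (α := H)
  obtain ⟨m, hm⟩ := Subgroup.mem_zpowers_iff.mp (hc ⟨x, Subgroup.subset_closure (by simp)⟩)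
  obtain ⟨n, hn⟩ := Subgroup.mem_zpowers_iff.mp (hc ⟨y, Subgroup.subset_closure (by simp)⟩)
  exact ⟨c, m, n, congrArg Subtype.val hm, congrArg Subtype.val hn⟩

theorem map_eq_one_of_commute {G : Type*} [Group G] [IsMulTorsionFree G] {x y : FreeGroup α}
    (h : Commute x y) (hx : x ≠ 1) (φ : FreeGroup α →* G) (hφx : φ x = 1) : φ y = 1 := by
  obtain ⟨c, m, n, rfl, rfl⟩ := exists_zpow_eq_of_commute h
  have hm : m ≠ 0 := by rintro rfl; exact hx (zpow_zero c)
  rw [map_zpow, IsMulTorsionFree.zpow_eq_one_iff_left hm] at hφx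
  rw [map_zpow, hφx, one_zpow]

end FreeGroup

theorem Finset.exists_superset_insert_of_not_of_univ {α : Type*} [Fintype α] [DecidableEq α]
    {p : Finset α → Prop} {s : Finset α} (hs : ¬p s) (huniv : p univ) :
    ∃ t, s ⊆ t ∧ ∃ a ∉ t, ¬p t ∧ p (insert a t) := by
  classical
  obtain ⟨t, ht, hmax⟩ := (univ.filter fun t => s ⊆ t ∧ ¬p t).exists_max_image card
    ⟨s, by simpa using hs⟩
  simp only [mem_filter, mem_univ, true_and, and_imp] at ht hmax
  obtain ⟨a, ha⟩ : ∃ a, a ∉ t := by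
    by_contra! h
    exact ht.2 (by rwa [eq_univ_of_forall h])
  refine ⟨t, ht.1, a, ha, ht.2, by_contra fun hp => ?_⟩
  have := hmax _ (ht.1.trans (subset_insert a t)) hp
  rw [card_insert_of_notMem ha] at this
  omega

theorem Finset.card_insert_inter_of_notMem {α : Type*} [DecidableEq α] {s t : Finset α} {a : α}
    (ha : a ∉ s) : (insert a s ∩ t).card = (s ∩ t).card + if a ∈ t then 1 else 0 := by
  split_ifs with hat
  · rw [insert_inter_of_mem hat, card_insert_of_notMem (fun h => ha (mem_inter.mp h).1)]
  · rw [insert_inter_of_notMem hat, add_zero]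

section kill

variable {V : Type*} [DecidableEq V]

@[simp]
theorem kill_of (S : Finset V) (a : V) :
    kill S (FreeGroup.of a) = if a ∈ S then 1 else FreeGroup.of a :=
  FreeGroup.lift_apply_of

theorem kill_kill {S S' : Finset V} (h : S ⊆ S') (x : FreeGroup V) :
    kill S' (kill S x) = kill S' x := by
  suffices (kill S').comp (kill S) = kill S' from DFunLike.congr_fun this x
  refine FreeGroup.ext_hom _ _ fun a => ?_
  by_cases ha : a ∈ S
  · simp [ha, h ha]
  · simp [ha]

theorem kill_univ [Fintype V] (x : FreeGroup V) : kill Finset.univ x = 1 := by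
  suffices kill (Finset.univ : Finset V) = 1 from DFunLike.congr_fun this x
  exact FreeGroup.ext_hom _ _ fun a => by simp

theorem SupportedIn.kill_eq_self {x : FreeGroup V} {L S : Finset V} (h : SupportedIn x L)
    (hLS : Disjoint L S) : kill S x = x := by
  refine MonoidHom.eqOn_closure (g := MonoidHom.id _) ?_ h
  rintro _ ⟨i, hi, rfl⟩
  simp [Finset.disjoint_left.mp hLS hi]

theorem SupportedIn.kill_eq_one {x : FreeGroup V} {L S : Finset V} (h : SupportedIn x L)
    (hLS : L ⊆ S) : kill S x = 1 := by
  refine MonoidHom.eqOn_closure (g := 1) ?_ h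
  rintro _ ⟨i, hi, rfl⟩
  simp [hLS hi]

theorem SupportedIn.map_kill {x : FreeGroup V} {L : Finset V} (h : SupportedIn x L)
    (S : Finset V) : SupportedIn (kill S x) L := by
  refine (Subgroup.closure_le (K := (Subgroup.closure _).comap (kill S))).mpr ?_ h
  rintro _ ⟨i, hi, rfl⟩
  rw [SetLike.mem_coe, Subgroup.mem_comap, kill_of]
  split_ifs
  · exact one_mem _
  · exact Subgroup.subset_closure ⟨i, hi, rfl⟩

theorem SupportedIn.eq_one_of_disjoint {x : FreeGroup V} {L R : Finset V} (hLR : Disjoint L R)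
    (hL : SupportedIn x L) (hR : SupportedIn x R) : x = 1 := by
  rw [← hL.kill_eq_self hLR, hR.kill_eq_one subset_rfl]

theorem kill_mul_eq_one_iff {x y : FreeGroup V} {L R : Finset V} (hLR : Disjoint L R)
    (hx : SupportedIn x L) (hy : SupportedIn y R) (S : Finset V) :
    kill S (x * y) = 1 ↔ kill S x = 1 ∧ kill S y = 1 := by
  refine ⟨fun h => ?_, fun ⟨h₁, h₂⟩ => by rw [map_mul, h₁, h₂, one_mul]⟩
  rw [map_mul, mul_eq_one_iff_eq_inv] at h
  have hxL := hx.map_kill S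
  have hxR : SupportedIn (kill S x) R := h ▸ inv_mem (hy.map_kill S)
  have h₁ := hxL.eq_one_of_disjoint hLR hxR
  exact ⟨h₁, by rwa [h₁, eq_comm, inv_eq_one] at h⟩

end kill

theorem Finset.card_inter_add_card_inter_of_disjoint_of_union_eq_univ {α : Type*} [Fintype α]
    [DecidableEq α] {L R : Finset α} (hLR : Disjoint L R) (hcover : L ∪ R = univ) (S : Finset α) :
    (S ∩ L).card + (S ∩ R).card = S.card := by
  rw [← card_union_of_disjoint (hLR.mono inter_subset_right inter_subset_right),
    ← inter_union_distrib_left, hcover, inter_univ]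

section KilledTogether

variable {V : Type*} [DecidableEq V]

def KilledTogether (x y : FreeGroup V) : Prop :=
  ∃ S v, v ∉ S ∧ kill S x ≠ 1 ∧ kill S y ≠ 1 ∧ kill (insert v S) x = 1 ∧ kill (insert v S) y = 1

theorem KilledTogether.symm {x y : FreeGroup V} (h : KilledTogether x y) : KilledTogether y x :=
  let ⟨S, v, hv, hx, hy, hx', hy'⟩ := h
  ⟨S, v, hv, hy, hx, hy', hx'⟩

theorem kill_eq_one_iff_of_commute {x y : FreeGroup V} {S S' : Finset V} (hSS' : S ⊆ S')
    (hcomm : Commute (kill S x) (kill S y)) (hx : kill S x ≠ 1) (hy : kill S y ≠ 1) :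
    kill S' x = 1 ↔ kill S' y = 1 := by
  rw [← kill_kill hSS' x, ← kill_kill hSS' y]
  exact ⟨FreeGroup.map_eq_one_of_commute hcomm hx _,
    FreeGroup.map_eq_one_of_commute hcomm.symm hy _⟩

theorem kill_commutatorElement_eq_one_iff [Fintype V] {x y : FreeGroup V}
    (hxy : ¬KilledTogether x y) (S : Finset V) :
    kill S ⁅x, y⁆ = 1 ↔ kill S x = 1 ∨ kill S y = 1 := by
  rw [map_commutatorElement]
  refine ⟨fun h => by_contra fun hS => ?_, ?_⟩
  · push Not at hS
    have hsync {S' : Finset V} (hSS' : S ⊆ S') : kill S' x = 1 ↔ kill S' y = 1 :=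
      kill_eq_one_iff_of_commute hSS' (commutatorElement_eq_one_iff_commute.mp h) hS.1 hS.2
    obtain ⟨T, hST, v, hv, hxT, hxT'⟩ :=
      Finset.exists_superset_insert_of_not_of_univ (p := fun S => kill S x = 1) hS.1 (kill_univ x)
    exact hxy ⟨T, v, hv, hxT, mt (hsync hST).mpr hxT, hxT',
      (hsync (hST.trans (Finset.subset_insert v T))).mp hxT'⟩
  · rintro (h | h) <;> simp [h]

theorem CommTree.kill_value_eq_one_iff [Fintype V] {T : CommTree V}
    (hT : T.leaves.Pairwise fun x y => ¬KilledTogether x y) (S : Finset V) :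
    kill S T.value = 1 ↔ ∃ x ∈ T.leaves, kill S x = 1 := by
  induction T generalizing S with
  | leaf h => simp [value, leaves]
  | node a b iha ihb =>
    obtain ⟨ha, hb, hab⟩ := List.pairwise_append.mp hT
    have hsep : ¬KilledTogether a.value b.value := by
      rintro ⟨S, v, hv, haS, hbS, haS', hbS'⟩
      obtain ⟨x, hx, hxS'⟩ := (iha ha _).mp haS'
      obtain ⟨y, hy, hyS'⟩ := (ihb hb _).mp hbS'
      exact hab x hx y hy ⟨S, v, hv, fun h => haS ((iha ha S).mpr ⟨x, hx, h⟩),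
        fun h => hbS ((ihb hb S).mpr ⟨y, hy, h⟩), hxS', hyS'⟩
    simp only [value, leaves, kill_commutatorElement_eq_one_iff hsep, iha ha, ihb hb,
      List.mem_append, or_and_right, exists_or]

theorem not_killedTogether_of_kill_eq_one_iff [Fintype V] {L R : Finset V} (hLR : Disjoint L R)
    (hcover : L ∪ R = Finset.univ) {k j j' : ℕ} {x y : FreeGroup V}
    (hx : ∀ S, kill S x = 1 ↔ j ≤ (S ∩ L).card ∧ k - j ≤ (S ∩ R).card)
    (hy : ∀ S, kill S y = 1 ↔ j' ≤ (S ∩ L).card ∧ k - j' ≤ (S ∩ R).card) (hjj' : j ≠ j') :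
    ¬KilledTogether x y := by
  rintro ⟨S, v, hv, hxS, hyS, hxS', hyS'⟩
  simp only [ne_eq, hx, hy, Finset.card_insert_inter_of_notMem hv] at hxS hyS hxS' hyS'
  rcases Finset.mem_union.mp (hcover ▸ Finset.mem_univ v) with hvL | hvR
  · simp only [hvL, Finset.disjoint_left.mp hLR hvL, if_true, if_false] at hxS' hyS'
    omega
  · simp only [hvR, Finset.disjoint_right.mp hLR hvR, if_true, if_false] at hxS' hyS'
    omega

end KilledTogether

theorem List.pairwise_of_coe_eq_map {ι β : Type*} {r : β → β → Prop}
    (hr : ∀ {x y}, r x y → r y x) {l : List β} {s : Finset ι} {f : ι → β}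
    (hl : (l : Multiset β) = s.val.map f) (hf : ∀ i ∈ s, ∀ j ∈ s, i ≠ j → r (f i) (f j)) :
    l.Pairwise r := by
  have hperm : l.Perm (s.toList.map f) := Multiset.coe_eq_coe.mp <| by
    rw [hl, ← Multiset.map_coe, Finset.coe_toList]
  rw [hperm.pairwise_iff hr, List.pairwise_map]
  exact s.nodup_toList.imp_of_mem fun hi hj =>
    hf _ (Finset.mem_toList.mp hi) _ (Finset.mem_toList.mp hj)

theorem exists_feasible_split_iff {k l r s t : ℕ} (hs : s ≤ l) (ht : t ≤ r) :
    (∃ j ∈ (Finset.range (k + 1)).filter (Feasible k l r), j ≤ s ∧ k - j ≤ t) ↔ k ≤ s + t := by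
  simp only [Finset.mem_filter, Finset.mem_range, Feasible]
  constructor
  · rintro ⟨j, -, hjs, hjt⟩
    omega
  · intro h
    exact ⟨min k s, ⟨by omega, by omega, by omega, by omega⟩, by omega, by omega⟩

theorem binary_splitting_step_correct_general {V : Type*} [Fintype V] [DecidableEq V]
    (k : ℕ)
    (L R : Finset V) (hdisj : Disjoint L R)
    (hunion : L ∪ R = Finset.univ)
    (A B : ℕ → FreeGroup V)
    (hAsupp : ∀ j, Feasible k L.card R.card j → SupportedIn (A j) L)
    (hBsupp : ∀ j, Feasible k L.card R.card j → SupportedIn (B j) R)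
    (hA : ∀ j, Feasible k L.card R.card j →
      ∀ S : Finset V, kill S (A j) = 1 ↔ j ≤ (S ∩ L).card)
    (hB : ∀ j, Feasible k L.card R.card j →
      ∀ S : Finset V, kill S (B j) = 1 ↔ k - j ≤ (S ∩ R).card)
    (T : CommTree V)
    (hT : (T.leaves : Multiset (FreeGroup V)) =
      (((Finset.range (k + 1)).filter (Feasible k L.card R.card)).val).map
        (fun j => A j * B j)) :
    ∀ S : Finset V, kill S T.value = 1 ↔ k ≤ S.card := by
  set F := (Finset.range (k + 1)).filter (Feasible k L.card R.card)
  have hD : ∀ j ∈ F, ∀ S, kill S (A j * B j) = 1 ↔ j ≤ (S ∩ L).card ∧ k - j ≤ (S ∩ R).card := by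
    intro j hj S
    have hfeas := (Finset.mem_filter.mp hj).2
    rw [kill_mul_eq_one_iff hdisj (hAsupp j hfeas) (hBsupp j hfeas), hA j hfeas, hB j hfeas]
  have hpair : T.leaves.Pairwise fun x y => ¬KilledTogether x y :=
    List.pairwise_of_coe_eq_map (fun h h' => h h'.symm) hT fun i hi j hj =>
      not_killedTogether_of_kill_eq_one_iff hdisj hunion (hD i hi) (hD j hj)
  have hleaves : ∀ x, x ∈ T.leaves ↔ ∃ j ∈ F, A j * B j = x := fun x => by
    rw [← Multiset.mem_coe, hT, Multiset.mem_map]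
    rfl
  intro S
  rw [CommTree.kill_value_eq_one_iff hpair,
    ← Finset.card_inter_add_card_inter_of_disjoint_of_union_eq_univ hdisj hunion S,
    ← exists_feasible_split_iff (Finset.card_le_card Finset.inter_subset_right)
      (Finset.card_le_card Finset.inter_subset_right)]
  constructor
  · rintro ⟨_, hx, hkill⟩
    obtain ⟨j, hj, rfl⟩ := (hleaves _).mp hx
    exact ⟨j, hj, (hD j hj S).mp hkill⟩
  · rintro ⟨j, hj, hjS⟩
    exact ⟨_, (hleaves _).mpr ⟨j, hj, rfl⟩, (hD j hj S).mpr hjS⟩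

theorem binary_splitting_step_correct {V : Type*} [Fintype V] [DecidableEq V]
    (k : ℕ) (hk₁ : 1 ≤ k) (hk₂ : k ≤ Fintype.card V)
    (L R : Finset V) (hdisj : Disjoint L R)
    (hLne : L.Nonempty) (hRne : R.Nonempty) (hunion : L ∪ R = Finset.univ)
    (A B : ℕ → FreeGroup V)
    (hAsupp : ∀ j, Feasible k L.card R.card j → SupportedIn (A j) L)
    (hBsupp : ∀ j, Feasible k L.card R.card j → SupportedIn (B j) R)
    (hA : ∀ j, Feasible k L.card R.card j →
      ∀ S : Finset V, kill S (A j) = 1 ↔ j ≤ (S ∩ L).card)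
    (hB : ∀ j, Feasible k L.card R.card j →
      ∀ S : Finset V, kill S (B j) = 1 ↔ k - j ≤ (S ∩ R).card)
    (T : CommTree V)
    (hT : (T.leaves : Multiset (FreeGroup V)) =
      (((Finset.range (k + 1)).filter (Feasible k L.card R.card)).val).map
        (fun j => A j * B j)) :
    ∀ S : Finset V, kill S T.value = 1 ↔ k ≤ S.card :=
  binary_splitting_step_correct_general k L R hdisj hunion A B hAsupp hBsupp hA hB T hT
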